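/- In G₁₁ set v = s·u·s and w = z³·s, and let G₈ be the subgroup generated by u and v. Then w = u·v·u = v·u·v, s⁻¹·w·s = w, s⁻¹·v·s = u, w² = u·v·u·v·u·v = v·u·v·u·v·u = z⁶, the center of G₈ equals the cyclic subgroup generated by w² = z⁶ (which has order 4), and Z(G₈) = G₈ ∩ Z(G₁₁); moreover, with Z₈ = {1, z⁶, z¹², z¹⁸}, U = {1, u, u², u³}, and X₈ = {1, v, v², w, w·u, w·u²}, the map Z₈ × U × X₈ → G₈ sending (y, v', x) to y·v'·x is a bijection onto G₈. -/

import Mathlib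

open Pointwise

namespace Octa

def rels : Set (FreeGroup (Fin 3)) :=
  { FreeGroup.of 0 ^ 2, FreeGroup.of 1 ^ 3, FreeGroup.of 2 ^ 4,
    FreeGroup.of 0 * FreeGroup.of 1 * FreeGroup.of 2 *
      (FreeGroup.of 1 * FreeGroup.of 2 * FreeGroup.of 0)⁻¹,
    FreeGroup.of 0 * FreeGroup.of 1 * FreeGroup.of 2 *
      (FreeGroup.of 2 * FreeGroup.of 0 * FreeGroup.of 1)⁻¹ }

/-- The group `G₁₁ = ⟨s, t, u | s² = t³ = u⁴ = 1, stu = tus = ust⟩`. -/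
abbrev G11 := PresentedGroup rels

def s : G11 := PresentedGroup.of 0
def t : G11 := PresentedGroup.of 1
def u : G11 := PresentedGroup.of 2
def z : G11 := s * t * u

def v : G11 := s * u * s
def w : G11 := z ^ 3 * s
def G8 : Subgroup G11 := Subgroup.closure {u, v}

/-!
Write `d = w`. The relation `t³ = 1`, with `t = s⁻¹ z u⁻¹` and `z` central, says `z³ = (us)³`,
that is `w = uvu`, and conjugating by `s` gives `w = vuv`. So `G₈` is generated by `a = u` and
`b = v` with `aba = d = bab` and `a⁴ = 1`. In any such group conjugation by `d` swaps `a` and `b`,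
so `d²` commutes with both, and `a b² a = d² b²` forces `d⁸ = 1`. Right multiplication by `a` or
`b` maps each of `1, b, b², d, da, da²` to some `d^(2k) aⁱ x` with `x` again among them, so every
element of `⟨a, b⟩` has this form. That the 96 products are distinct, and that only the powers of
`d²` among them are central, is read off their images in a 2-dimensional representation of `G₁₁`
over `ZMod 73`.
-/

end Octa

theorem Subgroup.inf_center_le_map_subtype_center {G : Type*} [Group G] (H : Subgroup G) :
    H ⊓ center G ≤ (center H).map H.subtype := by
  rintro g ⟨hgH, hg⟩
  exact ⟨⟨g, hgH⟩, mem_center_iff.mpr fun h => Subtype.ext (mem_center_iff.mp hg h), rfl⟩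

theorem Set.bijOn_range_of_injective_comp {α β ι : Type*} {f : α → β} {σ : ι → α}
    (h : Function.Injective (f ∘ σ)) : Set.BijOn f (Set.range σ) (Set.range (f ∘ σ)) :=
  Set.range_comp f σ ▸ h.injOn_range.bijOn_image

theorem range_pow_fin_four {G : Type*} [Monoid G] (g : G) :
    Set.range (fun k : Fin 4 => g ^ (k : ℕ)) = {1, g, g ^ 2, g ^ 3} := by
  ext x; simp [Fin.exists_fin_succ]; tauto

section Braid

variable {G : Type*} [Group G] {a b d : G}

theorem semiconjBy_of_braid (hab : a * b * a = d) (hba : b * a * b = d) : SemiconjBy d a b := by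
  subst hab
  rw [SemiconjBy]
  conv_lhs => rw [← hba]
  group

theorem commute_sq_of_braid (hab : a * b * a = d) (hba : b * a * b = d) : Commute (d ^ 2) a :=
  sq d ▸ (semiconjBy_of_braid hba hab).mul_left (semiconjBy_of_braid hab hba)

theorem pow_eq_one_of_braid {n : ℕ} (hab : a * b * a = d) (hba : b * a * b = d)
    (ha : a ^ n = 1) : b ^ n = 1 := by
  have h := (semiconjBy_of_braid hab hba).pow_right n
  rwa [SemiconjBy, ha, mul_one, right_eq_mul] at h

theorem mul_sq_mul_of_braid (hab : a * b * a = d) (hba : b * a * b = d) (ha : a ^ 4 = 1) :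
    a * b ^ 2 * a = d ^ 2 * b ^ 2 := by
  have h : a⁻¹ * d = d * b⁻¹ := by
    rw [inv_mul_eq_iff_eq_mul, ← mul_assoc, eq_mul_inv_iff_mul_eq]
    exact (semiconjBy_of_braid hba hab).eq
  have hb2 : (b ^ 2)⁻¹ = b ^ 2 :=
    inv_eq_of_mul_eq_one_left (by rw [← pow_add, pow_eq_one_of_braid hab hba ha])
  calc a * b ^ 2 * a = a * b * a * (a⁻¹ * (b * a * b)) * b⁻¹ := by rw [sq]; group
    _ = d ^ 2 * (b ^ 2)⁻¹ := by rw [hab, hba, h, sq, sq]; group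
    _ = d ^ 2 * b ^ 2 := by rw [hb2]

theorem braid_sq_pow_four (hab : a * b * a = d) (hba : b * a * b = d) (ha : a ^ 4 = 1) :
    (d ^ 2) ^ 4 = 1 := by
  have hDa := commute_sq_of_braid hab hba
  have key := mul_sq_mul_of_braid hab hba ha
  have hconj : a ^ 2 * b ^ 2 * a ^ 2 = (d ^ 2) ^ 2 * b ^ 2 := by
    calc a ^ 2 * b ^ 2 * a ^ 2 = a * (a * b ^ 2 * a) * a := by simp only [sq]; group
      _ = d ^ 2 * (a * b ^ 2 * a) := by
        conv_lhs => rw [key]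
        simp only [mul_assoc, hDa.symm.left_comm]
      _ = (d ^ 2) ^ 2 * b ^ 2 := by rw [key, ← mul_assoc, ← sq]
  have : (d ^ 2) ^ 4 * b ^ 2 = 1 * b ^ 2 := by
    calc (d ^ 2) ^ 4 * b ^ 2 = (d ^ 2) ^ 2 * (a ^ 2 * b ^ 2 * a ^ 2) := by
          rw [hconj, ← mul_assoc, ← pow_add]
      _ = a ^ 2 * (a ^ 2 * b ^ 2 * a ^ 2) * a ^ 2 := by
        conv_rhs => rw [hconj]
        simp only [mul_assoc, (hDa.pow_pow 2 2).symm.left_comm]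
      _ = a ^ 4 * b ^ 2 * a ^ 4 := by simp only [pow_succ, pow_zero, one_mul]; group
      _ = 1 * b ^ 2 := by simp only [ha, one_mul, mul_one]
  exact mul_right_cancel this

def braidCosetReps (a b d : G) : Set G := {1, b, b ^ 2, d, d * a, d * a ^ 2}

def braidNormalForms (a b d : G) : Set G :=
  {g | ∃ k i : ℕ, ∃ x ∈ braidCosetReps a b d, g = (d ^ 2) ^ k * a ^ i * x}

theorem mul_left_mem_braidNormalForms (hab : a * b * a = d) (hba : b * a * b = d) (ha : a ^ 4 = 1)
    {x : G} (hx : x ∈ braidCosetReps a b d) :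
    x * a ∈ braidNormalForms a b d := by
  have hinv : a⁻¹ = a ^ 3 := inv_eq_of_mul_eq_one_right (by rw [← pow_succ', ha])
  have hDa := commute_sq_of_braid hab hba
  simp only [braidNormalForms, braidCosetReps, Set.mem_insert_iff, Set.mem_singleton_iff] at hx ⊢
  rcases hx with hx | hx | hx | hx | hx | hx <;> subst x
  · exact ⟨0, 1, 1, by simp⟩
  · refine ⟨0, 3, d, by simp, ?_⟩
    rw [pow_zero, one_mul, ← hinv, ← hab]; group
  · refine ⟨1, 3, b ^ 2, by simp, ?_⟩
    calc b ^ 2 * a = a⁻¹ * (a * b ^ 2 * a) := by group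
      _ = _ := by
        rw [mul_sq_mul_of_braid hab hba ha, ← hinv, pow_one, ← mul_assoc, hDa.inv_right.eq]
  · exact ⟨0, 0, d * a, by simp, by simp⟩
  · exact ⟨0, 0, d * a ^ 2, by simp, by simp only [sq, pow_zero, one_mul, mul_assoc]⟩
  · refine ⟨0, 1, b, by simp, ?_⟩
    calc d * a ^ 2 * a = a * b * a ^ 4 := by
          rw [← hab]; simp only [pow_succ, pow_zero, one_mul]; group
      _ = _ := by rw [ha]; simp

theorem mul_right_mem_braidNormalForms (hab : a * b * a = d) (hba : b * a * b = d) (ha : a ^ 4 = 1)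
    {x : G} (hx : x ∈ braidCosetReps a b d) :
    x * b ∈ braidNormalForms a b d := by
  have hinv : a⁻¹ = a ^ 3 := inv_eq_of_mul_eq_one_right (by rw [← pow_succ', ha])
  have hDa := commute_sq_of_braid hab hba
  have hDb := commute_sq_of_braid hba hab
  have key := mul_sq_mul_of_braid hba hab (pow_eq_one_of_braid hab hba ha)
  simp only [braidNormalForms, braidCosetReps, Set.mem_insert_iff, Set.mem_singleton_iff] at hx ⊢
  rcases hx with hx | hx | hx | hx | hx | hx <;> subst x
  · exact ⟨0, 0, b, by simp⟩
  · exact ⟨0, 0, b ^ 2, by simp, by simp [sq]⟩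
  · refine ⟨3, 1, d * a, by simp, ?_⟩
    -- both sides are inverse to `b`: `b³ = b⁻¹`, and `b · d⁶ a d a = d⁶ (b a² b) a² = d⁸ a⁴ = 1`
    have hbad : b * a * (d * a) = b * a ^ 2 * b * a ^ 2 := by rw [← hab]; simp only [sq]; group
    have hb_inv : b * ((d ^ 2) ^ 3 * a ^ 1 * (d * a)) = 1 := by
      calc b * ((d ^ 2) ^ 3 * a ^ 1 * (d * a)) = (d ^ 2) ^ 3 * (b * a * (d * a)) := by
            simp only [pow_one, mul_assoc, (hDb.pow_left 3).symm.left_comm]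
        _ = (d ^ 2) ^ 4 * a ^ 4 := by
            rw [hbad, key, mul_assoc, ← pow_add, ← mul_assoc, ← pow_succ]
        _ = 1 := by rw [braid_sq_pow_four hab hba ha, ha, one_mul]
    have hb3 : b * (b ^ 2 * b) = 1 := by
      rw [← pow_succ, ← pow_succ', pow_eq_one_of_braid hab hba ha]
    exact (eq_inv_of_mul_eq_one_right hb3).trans (eq_inv_of_mul_eq_one_right hb_inv).symm
  · exact ⟨0, 1, d, by simp, by rw [pow_zero, one_mul, pow_one]; exact semiconjBy_of_braid hba hab⟩
  · refine ⟨1, 3, 1, by simp, ?_⟩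
    rw [pow_one, ← hinv, mul_one, sq, ← hab]; group
  · refine ⟨1, 3, d * a ^ 2, by simp, ?_⟩
    have had : a⁻¹ * d = b * a := by rw [← hab]; group
    calc d * a ^ 2 * b = b * a * (b * a ^ 2 * b) := by rw [← hba]; simp only [sq]; group
      _ = d ^ 2 * (b * a * a ^ 2) := by
        rw [key]; simp only [mul_assoc, hDb.symm.left_comm, hDa.symm.left_comm]
      _ = _ := by rw [pow_one, ← hinv, mul_assoc (d ^ 2), ← mul_assoc a⁻¹, had, mul_assoc b]

theorem mul_mem_braidNormalForms (hab : a * b * a = d) (hba : b * a * b = d) (ha : a ^ 4 = 1)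
    {g y : G} (hg : g ∈ braidNormalForms a b d) (hy : y ∈ ({a, b} : Set G)) :
    g * y ∈ braidNormalForms a b d := by
  obtain ⟨k, i, x, hx, rfl⟩ := hg
  obtain ⟨k', i', x', hx', hxy⟩ : x * y ∈ braidNormalForms a b d := by
    rcases hy with rfl | rfl
    exacts [mul_left_mem_braidNormalForms hab hba ha hx,
      mul_right_mem_braidNormalForms hab hba ha hx]
  refine ⟨k + k', i + i', x', hx', ?_⟩
  rw [mul_assoc, hxy, pow_add, pow_add]
  simp only [mul_assoc, ((commute_sq_of_braid hab hba).pow_pow k' i).symm.left_comm]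

theorem closure_subset_braidNormalForms (hab : a * b * a = d) (hba : b * a * b = d)
    (ha : a ^ 4 = 1) : (Subgroup.closure {a, b} : Set G) ⊆ braidNormalForms a b d := by
  have hinv : ∀ y ∈ ({a, b} : Set G), y⁻¹ = y ^ 3 := by
    rintro y (rfl | rfl) <;> refine inv_eq_of_mul_eq_one_right ?_ <;> rw [← pow_succ']
    exacts [ha, pow_eq_one_of_braid hab hba ha]
  intro g hg
  induction hg using Subgroup.closure_induction_right with
  | one => exact ⟨0, 0, 1, by simp [braidCosetReps], by simp⟩
  | mul_right g _ y hy ih => exact mul_mem_braidNormalForms hab hba ha ih hy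
  | mul_inv_cancel g _ y hy ih =>
    rw [hinv y hy, pow_three, ← mul_assoc, ← mul_assoc]
    iterate 3 refine mul_mem_braidNormalForms hab hba ha ?_ hy
    exact ih

end Braid

namespace Octa

theorem s_sq : s ^ 2 = 1 :=
  (map_pow (PresentedGroup.mk rels) (FreeGroup.of 0) 2).symm.trans
    (PresentedGroup.one_of_mem (by simp [rels]))

theorem t_pow_three : t ^ 3 = 1 :=
  (map_pow (PresentedGroup.mk rels) (FreeGroup.of 1) 3).symm.trans
    (PresentedGroup.one_of_mem (by simp [rels]))

theorem u_pow_four : u ^ 4 = 1 :=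
  (map_pow (PresentedGroup.mk rels) (FreeGroup.of 2) 4).symm.trans
    (PresentedGroup.one_of_mem (by simp [rels]))

theorem z_eq_tus : z = t * u * s :=
  PresentedGroup.mk_eq_mk_of_mul_inv_mem (by simp [rels])

theorem z_eq_ust : z = u * s * t :=
  PresentedGroup.mk_eq_mk_of_mul_inv_mem (by simp [rels])

theorem s_mul_self : s * s = 1 := by rw [← sq, s_sq]

theorem s_inv : s⁻¹ = s := inv_eq_of_mul_eq_one_right s_mul_self

theorem z_mem_center : z ∈ Subgroup.center G11 := by
  rw [Subgroup.mem_center_iff]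
  intro g
  refine Subgroup.mem_centralizer_singleton_iff.mp
    (PresentedGroup.generated_by rels _ (fun i => ?_) g)
  rw [Subgroup.mem_centralizer_singleton_iff]
  fin_cases i
  · change s * z = z * s
    calc s * z = s * s * (t * u) := by rw [z]; group
      _ = t * u * (s * s) := by rw [s_mul_self, one_mul, mul_one]
      _ = z * s := by rw [z_eq_tus]; group
  · change t * z = z * t
    conv_lhs => rw [z_eq_ust]
    conv_rhs => rw [z_eq_tus]
    group
  · change u * z = z * u
    conv_lhs => rw [z]
    conv_rhs => rw [z_eq_ust]
    group

theorem commute_z (g : G11) : Commute z g := (Subgroup.mem_center_iff.mp z_mem_center g).symm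

theorem z_pow_three : z ^ 3 = (u * s) ^ 3 := by
  have ht : t = z * (s⁻¹ * u⁻¹) := by
    rw [← mul_assoc, (commute_z s⁻¹).eq, z]; group
  have h := t_pow_three
  rw [ht, (commute_z _).mul_pow] at h
  rw [eq_inv_of_mul_eq_one_left h, ← inv_pow, mul_inv_rev, inv_inv, inv_inv]

theorem uvu_eq_w : u * v * u = w := by
  rw [w, z_pow_three, v, pow_succ, sq]
  simp only [mul_assoc, s_mul_self, mul_one]

theorem s_mul_w_mul_s : s * w * s = w := by
  rw [w, ← mul_assoc, ← ((commute_z s).pow_left 3).eq, mul_assoc, s_mul_self, mul_one]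

theorem vuv_eq_w : v * u * v = w := by
  conv_rhs => rw [← s_mul_w_mul_s, ← uvu_eq_w]
  rw [v]; group

theorem w_sq : w ^ 2 = z ^ 6 := by
  rw [w, ((commute_z s).pow_left 3).mul_pow, s_sq, mul_one, ← pow_mul]

theorem u_mem_G8 : u ∈ G8 := Subgroup.subset_closure (by simp : u ∈ ({u, v} : Set G11))

theorem v_mem_G8 : v ∈ G8 := Subgroup.subset_closure (by simp : v ∈ ({u, v} : Set G11))

theorem w_mem_G8 : w ∈ G8 := uvu_eq_w ▸ mul_mem (mul_mem u_mem_G8 v_mem_G8) u_mem_G8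

theorem w_sq_mem_center : w ^ 2 ∈ Subgroup.center G11 :=
  w_sq ▸ Subgroup.pow_mem _ z_mem_center 6

theorem w_sq_pow_four : (w ^ 2) ^ 4 = 1 := braid_sq_pow_four uvu_eq_w vuv_eq_w u_pow_four

def x8 : Fin 6 → G11 := ![1, v, v ^ 2, w, w * u, w * u ^ 2]

def normalForm (p : Fin 4 × Fin 4 × Fin 6) : G11 := (w ^ 2) ^ (p.1 : ℕ) * u ^ (p.2.1 : ℕ) * x8 p.2.2

theorem range_x8 : Set.range x8 = braidCosetReps u v w := by
  ext x; simp [x8, braidCosetReps]; tauto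

theorem range_normalForm : Set.range normalForm = G8 := by
  apply subset_antisymm
  · rintro _ ⟨⟨k, i, j⟩, rfl⟩
    refine mul_mem (mul_mem (pow_mem (pow_mem w_mem_G8 2) _) (pow_mem u_mem_G8 _)) ?_
    fin_cases j
    exacts [one_mem _, v_mem_G8, pow_mem v_mem_G8 2, w_mem_G8, mul_mem w_mem_G8 u_mem_G8,
      mul_mem w_mem_G8 (pow_mem u_mem_G8 2)]
  · intro g hg
    obtain ⟨k, i, x, hx, rfl⟩ := closure_subset_braidNormalForms uvu_eq_w vuv_eq_w u_pow_four hg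
    obtain ⟨j, rfl⟩ : x ∈ Set.range x8 := range_x8 ▸ hx
    refine ⟨(⟨k % 4, Nat.mod_lt _ four_pos⟩, ⟨i % 4, Nat.mod_lt _ four_pos⟩, j), ?_⟩
    simp only [normalForm, ← pow_eq_pow_mod k w_sq_pow_four, ← pow_eq_pow_mod i u_pow_four]

-- `z` acts as the scalar `7`, which has order 24 in `ZMod 73`.
def repGen : Fin 3 → (Matrix (Fin 2) (Fin 2) (ZMod 73))ˣ :=
  ![Units.ofPowEqOne !![0, 1; 1, 0] 2 (by decide) two_ne_zero,
    Units.ofPowEqOne !![72, 43; 53, 66] 3 (by decide) three_ne_zero,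
    Units.ofPowEqOne !![1, 46; 17, 25] 4 (by decide) four_ne_zero]

theorem repGen_rels : ∀ r ∈ rels, FreeGroup.lift repGen r = 1 := by
  simp only [rels, Set.mem_insert_iff, Set.mem_singleton_iff]
  rintro r (rfl | rfl | rfl | rfl | rfl) <;> decide

def rep : G11 →* Matrix (Fin 2) (Fin 2) (ZMod 73) :=
  (Units.coeHom _).comp (PresentedGroup.toGroup repGen_rels)

theorem rep_comp_normalForm_injective : Function.Injective (rep ∘ normalForm) := by
  decide +kernel

theorem normalForm_injective : Function.Injective normalForm :=
  rep_comp_normalForm_injective.of_comp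

theorem eq_zero_of_rep_commute : ∀ i : Fin 4, ∀ j : Fin 6,
    rep (u ^ (i : ℕ) * x8 j * u) = rep (u * (u ^ (i : ℕ) * x8 j)) →
    rep (u ^ (i : ℕ) * x8 j * v) = rep (v * (u ^ (i : ℕ) * x8 j)) → i = 0 ∧ j = 0 := by
  decide +kernel

theorem orderOf_w_sq : orderOf (w ^ 2) = 4 :=
  orderOf_eq_prime_pow (p := 2) (n := 1) (fun h => absurd (congrArg rep h) (by decide +kernel))
    w_sq_pow_four

theorem map_center_G8_le : (Subgroup.center ↥G8).map G8.subtype ≤ Subgroup.zpowers (w ^ 2) := by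
  rintro _ ⟨g, hg, rfl⟩
  obtain ⟨⟨k, i, j⟩, hk⟩ : (g : G11) ∈ Set.range normalForm := range_normalForm ▸ g.2
  have hcomm : ∀ x ∈ G8, Commute (u ^ (i : ℕ) * x8 j) x := by
    intro x hx
    have h : Commute (g : G11) x :=
      (congrArg Subtype.val (Subgroup.mem_center_iff.mp hg ⟨x, hx⟩)).symm
    have hc : Commute ((w ^ 2) ^ (k : ℕ)) x :=
      (Subgroup.mem_center_iff.mp (pow_mem w_sq_mem_center _) x).symm
    rw [← hk, normalForm, mul_assoc] at h
    simpa using hc.inv_left.mul_left h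
  obtain ⟨rfl, rfl⟩ := eq_zero_of_rep_commute i j (congrArg rep (hcomm u u_mem_G8).eq)
    (congrArg rep (hcomm v v_mem_G8).eq)
  rw [Subgroup.coe_subtype, ← hk]
  simp [normalForm, x8]

theorem zpowers_w_sq_le : Subgroup.zpowers (w ^ 2) ≤ G8 ⊓ Subgroup.center G11 :=
  Subgroup.zpowers_le.mpr (Subgroup.mem_inf.mpr ⟨pow_mem w_mem_G8 2, w_sq_mem_center⟩)

theorem statement13 :
    w = u * v * u ∧
    w = v * u * v ∧
    s⁻¹ * w * s = w ∧
    s⁻¹ * v * s = u ∧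
    w ^ 2 = u * v * u * v * u * v ∧
    w ^ 2 = v * u * v * u * v * u ∧
    w ^ 2 = z ^ 6 ∧
    orderOf (z ^ 6) = 4 ∧
    (Subgroup.center ↥G8).map G8.subtype = Subgroup.zpowers (w ^ 2) ∧
    (Subgroup.center ↥G8).map G8.subtype = G8 ⊓ Subgroup.center G11 ∧
    Set.BijOn (fun p : G11 × G11 × G11 => p.1 * p.2.1 * p.2.2)
      (({1, z ^ 6, z ^ 12, z ^ 18} : Set G11) ×ˢ (({1, u, u ^ 2, u ^ 3} : Set G11) ×ˢ ({1, v, v ^ 2, w, w * u, w * u ^ 2} : Set G11)))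
      (G8 : Set G11) := by
  have hsets : ({1, z ^ 6, z ^ 12, z ^ 18} : Set G11) ×ˢ (({1, u, u ^ 2, u ^ 3} : Set G11) ×ˢ
      ({1, v, v ^ 2, w, w * u, w * u ^ 2} : Set G11)) =
      Set.range (Prod.map (fun k : Fin 4 => (w ^ 2) ^ (k : ℕ))
        (Prod.map (fun i : Fin 4 => u ^ (i : ℕ)) x8)) := by
    rw [Set.range_prodMap, Set.range_prodMap, range_pow_fin_four, range_pow_fin_four, range_x8,
      w_sq, ← pow_mul, ← pow_mul]
    rfl
  have hcenter := map_center_G8_le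
  refine ⟨uvu_eq_w.symm, vuv_eq_w.symm, by rw [s_inv, s_mul_w_mul_s], ?_, ?_, ?_, w_sq,
    w_sq ▸ orderOf_w_sq,
    le_antisymm hcenter (zpowers_w_sq_le.trans G8.inf_center_le_map_subtype_center),
    le_antisymm (hcenter.trans zpowers_w_sq_le) G8.inf_center_le_map_subtype_center,
    ?_⟩
  · rw [s_inv, v, show s * (s * u * s) * s = s * s * u * (s * s) by group, s_mul_self, one_mul,
      mul_one]
  · rw [sq]; nth_rewrite 1 [← uvu_eq_w]; rw [← vuv_eq_w]; group
  · rw [sq]; nth_rewrite 1 [← vuv_eq_w]; rw [← uvu_eq_w]; group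
  · rw [hsets, ← range_normalForm]
    exact Set.bijOn_range_of_injective_comp normalForm_injective

end Octa
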